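/- Let W ∈ ℝ^{n×n} be symmetric with nonnegative entries and positive row sums, D the diagonal matrix of row sums, S = D^{-1/2} W D^{-1/2}, and 𝕊̄ = (S ⊗ I + I ⊗ S)/2. Fix μ > 0, set α = 1/(1+μ), and let E ∈ ℝ^{n×n}. Then the matrix 𝕀 - α𝕊̄ ∈ ℝ^{n²×n²} is invertible, and the matrix F* ∈ ℝ^{n×n} determined by vec(F*) = (1-α)(𝕀 - α𝕊̄)^{-1} vec(E) is the unique global minimizer over ℝ^{n×n} of the objective J(F) = vec(F)ᵀ(𝕀 - 𝕊̄)vec(F) + μ‖F - E‖_F². -/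

import Mathlib

open Matrix Kronecker

/-- The symmetrically normalized matrix `S = D^{-1/2} W D^{-1/2}`. -/
noncomputable def normMat (n : ℕ) (W : Matrix (Fin n) (Fin n) ℝ) :
    Matrix (Fin n) (Fin n) ℝ :=
  (Matrix.diagonal fun i => (Real.sqrt (∑ j, W i j))⁻¹) * W *
    (Matrix.diagonal fun i => (Real.sqrt (∑ j, W i j))⁻¹)

/-- The mean Kronecker product `𝕊̄ = (S ⊗ I + I ⊗ S)/2`. -/
noncomputable def meanKron (n : ℕ) (W : Matrix (Fin n) (Fin n) ℝ) :
    Matrix (Fin n × Fin n) (Fin n × Fin n) ℝ :=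
  (2 : ℝ)⁻¹ • (normMat n W ⊗ₖ (1 : Matrix (Fin n) (Fin n) ℝ) +
    (1 : Matrix (Fin n) (Fin n) ℝ) ⊗ₖ normMat n W)

/-- The vectorization `vec(F)`, with `vec(F)_(i,k) = F k i` (columns stacked). -/
def vecM (n : ℕ) (F : Matrix (Fin n) (Fin n) ℝ) : Fin n × Fin n → ℝ :=
  fun p => F p.2 p.1

/-- The objective `J(F) = vec(F)ᵀ(𝕀 - 𝕊̄)vec(F) + μ‖F - E‖_F²`. -/
noncomputable def objJ (n : ℕ) (W : Matrix (Fin n) (Fin n) ℝ) (μ : ℝ)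
    (E : Matrix (Fin n) (Fin n) ℝ) (F : Matrix (Fin n) (Fin n) ℝ) : ℝ :=
  vecM n F ⬝ᵥ (((1 : Matrix (Fin n × Fin n) (Fin n × Fin n) ℝ) - meanKron n W).mulVec
    (vecM n F)) + μ * ∑ i, ∑ j, (F i j - E i j) ^ 2

lemma normMat_quad (n : ℕ) (W : Matrix (Fin n) (Fin n) ℝ) (hsym : Wᵀ = W)
    (hW : ∀ i j, 0 ≤ W i j) (hrow : ∀ i, 0 < ∑ j, W i j) (x : Fin n → ℝ) :
    x ⬝ᵥ (normMat n W).mulVec x ≤ x ⬝ᵥ x := by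
  set y : Fin n → ℝ := fun i => x i * (Real.sqrt (∑ j, W i j))⁻¹ with hy
  have hWsymm : ∀ i j, W j i = W i j := fun i j => by
    have := congrFun (congrFun hsym j) i
    simpa using this.symm
  have hdi : ∀ i, (∑ j, W i j) * ((Real.sqrt (∑ j, W i j))⁻¹ * (Real.sqrt (∑ j, W i j))⁻¹) = 1 := by
    intro i
    rw [← mul_inv, Real.mul_self_sqrt (hrow i).le]
    exact mul_inv_cancel₀ (hrow i).ne'
  have hyy : ∀ i, ∑ j, W i j * (y i * y i) = x i * x i := by
    intro i
    rw [← Finset.sum_mul]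
    simp only [hy]
    calc (∑ j, W i j) * (x i * (Real.sqrt (∑ j, W i j))⁻¹ * (x i * (Real.sqrt (∑ j, W i j))⁻¹))
        = x i * x i * ((∑ j, W i j) * ((Real.sqrt (∑ j, W i j))⁻¹ * (Real.sqrt (∑ j, W i j))⁻¹)) := by ring
      _ = x i * x i := by rw [hdi i, mul_one]
  have hq : x ⬝ᵥ (normMat n W).mulVec x = ∑ i, ∑ j, W i j * (y i * y j) := by
    simp only [normMat, dotProduct, mulVec, Finset.mul_sum, Matrix.mul_diagonal,
      Matrix.diagonal_mul, hy]
    exact Finset.sum_congr rfl fun i _ => Finset.sum_congr rfl fun j _ => by ring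
  have h1 : 0 ≤ ∑ i, ∑ j, W i j * (y i - y j) ^ 2 := by
    refine Finset.sum_nonneg fun i _ => Finset.sum_nonneg fun j _ => ?_
    exact mul_nonneg (hW i j) (sq_nonneg _)
  have h2 : ∑ i, ∑ j, W i j * (y i - y j) ^ 2
      = 2 * (x ⬝ᵥ x) - 2 * ∑ i, ∑ j, W i j * (y i * y j) := by
    have expand : ∀ i j, W i j * (y i - y j) ^ 2
        = W i j * (y i * y i) + W i j * (y j * y j) - 2 * (W i j * (y i * y j)) := by
      intro i j; ring
    simp only [expand]
    simp only [Finset.sum_sub_distrib, Finset.sum_add_distrib, ← Finset.mul_sum]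
    have e1 : ∑ i, ∑ j, W i j * (y i * y i) = x ⬝ᵥ x := by
      simp only [hyy, dotProduct]
    have e2 : ∑ i, ∑ j, W i j * (y j * y j) = x ⬝ᵥ x := by
      rw [Finset.sum_comm]
      have : ∀ j, ∑ i, W i j * (y j * y j) = x j * x j := by
        intro j
        rw [show (∑ i, W i j * (y j * y j)) = ∑ i, W j i * (y j * y j) from
          Finset.sum_congr rfl fun i _ => by rw [hWsymm j i], hyy j]
      simp only [this, dotProduct]
    rw [e1, e2]
    ring
  linarith [hq ▸ h2 ▸ h1]

lemma meanKron_quad (n : ℕ) (W : Matrix (Fin n) (Fin n) ℝ) (hsym : Wᵀ = W)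
    (hW : ∀ i j, 0 ≤ W i j) (hrow : ∀ i, 0 < ∑ j, W i j) (v : Fin n × Fin n → ℝ) :
    v ⬝ᵥ (meanKron n W).mulVec v ≤ v ⬝ᵥ v := by
  set S := normMat n W
  have hvv : v ⬝ᵥ v = ∑ i, ∑ k, v (i, k) * v (i, k) := by
    simp [dotProduct, Fintype.sum_prod_type]
  have hA : v ⬝ᵥ (S ⊗ₖ (1 : Matrix (Fin n) (Fin n) ℝ)).mulVec v
      = ∑ k, (fun i => v (i, k)) ⬝ᵥ S.mulVec (fun j => v (j, k)) := by
    simp only [dotProduct, mulVec, Fintype.sum_prod_type, kroneckerMap_apply,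
      Matrix.one_apply, mul_ite, mul_one, mul_zero, ite_mul, zero_mul,
      Finset.sum_ite_eq, Finset.mem_univ, if_true, Finset.mul_sum]
    rw [Finset.sum_comm]
  have hB : v ⬝ᵥ ((1 : Matrix (Fin n) (Fin n) ℝ) ⊗ₖ S).mulVec v
      = ∑ i, (fun k => v (i, k)) ⬝ᵥ S.mulVec (fun l => v (i, l)) := by
    simp only [dotProduct, mulVec, Fintype.sum_prod_type, kroneckerMap_apply,
      Matrix.one_apply, mul_ite, mul_one, mul_zero, ite_mul, zero_mul,
      Finset.sum_ite_eq, Finset.mem_univ, if_true, Finset.mul_sum]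
    refine Finset.sum_congr rfl fun i _ => Finset.sum_congr rfl fun k _ => ?_
    rw [Finset.sum_comm]
    simp [Finset.sum_ite_eq]
  have hA' : v ⬝ᵥ (S ⊗ₖ (1 : Matrix (Fin n) (Fin n) ℝ)).mulVec v ≤ v ⬝ᵥ v := by
    rw [hA, hvv, Finset.sum_comm]
    refine Finset.sum_le_sum fun k _ => ?_
    exact normMat_quad n W hsym hW hrow _
  have hB' : v ⬝ᵥ ((1 : Matrix (Fin n) (Fin n) ℝ) ⊗ₖ S).mulVec v ≤ v ⬝ᵥ v := by
    rw [hB, hvv]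
    refine Finset.sum_le_sum fun i _ => ?_
    exact normMat_quad n W hsym hW hrow _
  have : v ⬝ᵥ (meanKron n W).mulVec v
      = (2 : ℝ)⁻¹ * (v ⬝ᵥ (S ⊗ₖ (1 : Matrix (Fin n) (Fin n) ℝ)).mulVec v
        + v ⬝ᵥ ((1 : Matrix (Fin n) (Fin n) ℝ) ⊗ₖ S).mulVec v) := by
    simp [meanKron, Matrix.add_mulVec, Matrix.smul_mulVec, dotProduct_add,
      dotProduct_smul, smul_eq_mul, mul_add, S]
  rw [this]
  linarith

lemma normMat_symm (n : ℕ) (W : Matrix (Fin n) (Fin n) ℝ) (hsym : Wᵀ = W) :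
    (normMat n W)ᵀ = normMat n W := by
  simp [normMat, Matrix.transpose_mul, Matrix.diagonal_transpose, hsym, Matrix.mul_assoc]

lemma meanKron_symm (n : ℕ) (W : Matrix (Fin n) (Fin n) ℝ) (hsym : Wᵀ = W) :
    (meanKron n W)ᵀ = meanKron n W := by
  have h1 := Matrix.kroneckerMap_transpose (· * ·) (normMat n W)
    (1 : Matrix (Fin n) (Fin n) ℝ)
  have h2 := Matrix.kroneckerMap_transpose (· * ·)
    (1 : Matrix (Fin n) (Fin n) ℝ) (normMat n W)
  simp only [meanKron, Matrix.transpose_smul, Matrix.transpose_add, ← h1, ← h2,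
    Matrix.transpose_one, normMat_symm n W hsym]

/-- For `W` symmetric with nonnegative entries and positive row sums, `μ > 0` and
`α = 1/(1+μ)`, the matrix `𝕀 - α𝕊̄` is invertible, and the matrix `F*` determined by
`vec(F*) = (1-α)(𝕀 - α𝕊̄)⁻¹ vec(E)` is the unique global minimizer of the objective
`J(F) = vec(F)ᵀ(𝕀 - 𝕊̄)vec(F) + μ‖F - E‖_F²`. -/
theorem closed_form_unique_minimizer (n : ℕ) (W : Matrix (Fin n) (Fin n) ℝ) (hsym : Wᵀ = W)
    (hW : ∀ i j, 0 ≤ W i j) (hrow : ∀ i, 0 < ∑ j, W i j)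
    (μ : ℝ) (hμ : 0 < μ) (α : ℝ) (hα : α = 1 / (1 + μ)) (E : Matrix (Fin n) (Fin n) ℝ) :
    IsUnit ((1 : Matrix (Fin n × Fin n) (Fin n × Fin n) ℝ) - α • meanKron n W) ∧
    ∀ Fstar : Matrix (Fin n) (Fin n) ℝ,
      vecM n Fstar = (1 - α) •
        (((1 : Matrix (Fin n × Fin n) (Fin n × Fin n) ℝ) - α • meanKron n W)⁻¹.mulVec
          (vecM n E)) →
      ∀ F : Matrix (Fin n) (Fin n) ℝ, F ≠ Fstar →
        objJ n W μ E Fstar < objJ n W μ E F := by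
  have hμ1 : (0:ℝ) < 1 + μ := by linarith
  have hα0 : 0 < α := by rw [hα]; positivity
  have hα1 : α < 1 := by
    rw [hα, div_lt_one hμ1]; linarith
  set 𝕊 := meanKron n W with h𝕊
  set M' : Matrix (Fin n × Fin n) (Fin n × Fin n) ℝ := 1 - α • 𝕊 with hM'
  have hquad := meanKron_quad n W hsym hW hrow
  -- quadratic form of M'
  have hM'quad : ∀ v : Fin n × Fin n → ℝ,
      v ⬝ᵥ M'.mulVec v = v ⬝ᵥ v - α * (v ⬝ᵥ 𝕊.mulVec v) := by
    intro v
    simp [hM', Matrix.sub_mulVec, Matrix.one_mulVec, dotProduct_sub,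
      Matrix.smul_mulVec, dotProduct_smul, smul_eq_mul]
  have hpd : ∀ v : Fin n × Fin n → ℝ, v ≠ 0 → 0 < v ⬝ᵥ M'.mulVec v := by
    intro v hv
    have h2 : 0 < v ⬝ᵥ v := by
      rcases (dotProduct_self_eq_zero (v := v)).not.mpr hv with h
      have hnn : 0 ≤ v ⬝ᵥ v := Finset.sum_nonneg fun i _ => mul_self_nonneg _
      exact lt_of_le_of_ne hnn (Ne.symm h)
    have h3 := hquad v
    rw [hM'quad v]
    nlinarith
  -- symmetry of M'
  have hM'symm : M'ᵀ = M' := by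
    simp [hM', Matrix.transpose_sub, Matrix.transpose_smul, Matrix.transpose_one, h𝕊,
      meanKron_symm n W hsym]
  -- M' is positive definite
  have hposdef : M'.PosDef := by
    refine Matrix.PosDef.of_dotProduct_mulVec_pos ?_ ?_
    · rw [Matrix.IsHermitian, Matrix.conjTranspose_eq_transpose_of_trivial, hM'symm]
    · intro x hx
      simpa using hpd x hx
  have hUnit : IsUnit M' := by
    rw [Matrix.isUnit_iff_isUnit_det]
    exact (hposdef.det_pos.ne').isUnit
  have hdet : IsUnit M'.det := (Matrix.isUnit_iff_isUnit_det M').mp hUnit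
  refine ⟨hUnit, ?_⟩
  intro Fstar hFstar F hne
  set e := vecM n E with he
  set vs := vecM n Fstar with hvs
  set v := vecM n F with hv
  -- symmetric bilinear lemma
  have hbil : ∀ x y : Fin n × Fin n → ℝ, x ⬝ᵥ M'.mulVec y = y ⬝ᵥ M'.mulVec x := by
    intro x y
    rw [Matrix.dotProduct_mulVec, ← Matrix.mulVec_transpose, hM'symm, dotProduct_comm]
  have hMvs : M'.mulVec vs = (1 - α) • e := by
    rw [hFstar, Matrix.mulVec_smul, Matrix.mulVec_mulVec, Matrix.mul_nonsing_inv _ hdet,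
      Matrix.one_mulVec]
  -- expansion of objJ
  have hobj : ∀ G : Matrix (Fin n) (Fin n) ℝ,
      objJ n W μ E G = (1 + μ) * (vecM n G ⬝ᵥ M'.mulVec (vecM n G))
        - 2 * μ * (e ⬝ᵥ vecM n G) + μ * (e ⬝ᵥ e) := by
    intro G
    have hsum : ∑ i, ∑ j, (G i j - E i j) ^ 2 = (vecM n G - e) ⬝ᵥ (vecM n G - e) := by
      simp only [dotProduct, Fintype.sum_prod_type, vecM, he, Pi.sub_apply]
      rw [Finset.sum_comm]
      exact Finset.sum_congr rfl fun i _ => Finset.sum_congr rfl fun j _ => by ring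
    have h1S : vecM n G ⬝ᵥ ((1 - 𝕊).mulVec (vecM n G))
        = vecM n G ⬝ᵥ vecM n G - vecM n G ⬝ᵥ 𝕊.mulVec (vecM n G) := by
      simp [Matrix.sub_mulVec, Matrix.one_mulVec, dotProduct_sub]
    have hexp : (vecM n G - e) ⬝ᵥ (vecM n G - e)
        = vecM n G ⬝ᵥ vecM n G - 2 * (e ⬝ᵥ vecM n G) + e ⬝ᵥ e := by
      simp [dotProduct_sub, sub_dotProduct, dotProduct_comm e (vecM n G)]
      ring
    have hαμ : (1 + μ) * α = 1 := by
      rw [hα]; field_simp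
    rw [objJ, hsum, h1S, hexp, hM'quad]
    linear_combination (vecM n G ⬝ᵥ 𝕊.mulVec (vecM n G)) * hαμ
  -- the minimizer property
  have hMvs2 : ∀ x : Fin n × Fin n → ℝ, x ⬝ᵥ M'.mulVec vs = (1 - α) * (e ⬝ᵥ x) := by
    intro x
    rw [hMvs, dotProduct_smul, smul_eq_mul, dotProduct_comm]
  have hdne : v - vs ≠ 0 := by
    intro h
    apply hne
    have hveq : v = vs := sub_eq_zero.mp h
    apply Matrix.ext
    intro i j
    exact congrFun hveq (j, i)
  have t1 : vs ⬝ᵥ M'.mulVec v = (1 - α) * (e ⬝ᵥ v) := by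
    rw [hbil vs v, hMvs2 v]
  have hdd : (v - vs) ⬝ᵥ M'.mulVec (v - vs)
      = v ⬝ᵥ M'.mulVec v - 2 * ((1 - α) * (e ⬝ᵥ v)) + (1 - α) * (e ⬝ᵥ vs) := by
    rw [Matrix.mulVec_sub, dotProduct_sub, sub_dotProduct, sub_dotProduct, t1,
      hMvs2 v, hMvs2 vs]
    ring
  have hμα : (1 + μ) * (1 - α) = μ := by
    rw [hα]; field_simp; ring
  have hfinal : objJ n W μ E F - objJ n W μ E Fstar
      = (1 + μ) * ((v - vs) ⬝ᵥ M'.mulVec (v - vs)) := by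
    rw [hobj F, hobj Fstar, hdd, show vs ⬝ᵥ M'.mulVec vs = (1 - α) * (e ⬝ᵥ vs) from
      hMvs2 vs]
    linear_combination (2 * (e ⬝ᵥ v) - 2 * (e ⬝ᵥ vs)) * hμα
  have hpos := hpd _ hdne
  nlinarith [mul_pos hμ1 hpos]
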